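/- If (A, dom, 𝕀) ∈ C_DG, then 𝕀(rel) is tf_D-compatible with respect to the policy ↝ of the downgrader architecture DG; that is, for all α, β ∈ A*, if tf_D^{↝}(α) = tf_D^{↝}(β) then 𝕀(rel)(α, a) = 𝕀(rel)(β, a) for all a ∈ A with dom(a) = D. -/

import Mathlib

structure Machine (S A D O : Type) where
  s0 : S
  step : S → A → S
  dom : A → D
  obs : D → S → O

namespace Machine

def run {S A D O : Type} (M : Machine S A D O) (α : List A) : S :=
  α.foldl M.step M.s0

end Machine
/-- An extended architecture: `edge u v = none` means no edge, `edge u v = some none`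
means an edge labelled `⊤`, and `edge u v = some (some f)` means an edge labelled by
the filter-function name `f`.  There is at most one label per ordered pair by
construction, and the relation is reflexive with label `⊤`. -/
structure ExtArch (D L : Type) where
  edge : D → D → Option (Option L)
  refl : ∀ u, edge u u = some none

/-- Values of the `tf` function and of filter-function interpretations:
`eps` is the empty value ε, `base v` an arbitrary basic value, and
`pair σ a` the pair `(σ, a)` of a `tf` value and an action. -/
inductive TFVal (A V : Type) where
  | eps : TFVal A V
  | base : V → TFVal A V
  | pair : List (TFVal A V) → A → TFVal A V

/-- `σ ⌢ x`: appends `x` as a single new last element unless `x = ε`. -/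
def snoc' {A V : Type} (σ : List (TFVal A V)) : TFVal A V → List (TFVal A V)
  | .eps => σ
  | x => σ ++ [x]

/-- `tf`, computed on the reversed action sequence. -/
def tfR {A D L V : Type} (Arch : ExtArch D L) (dm : A → D)
    (I : L → List A → A → TFVal A V) : List A → D → List (TFVal A V)
  | [], _ => []
  | a :: ρ, u =>
    match Arch.edge (dm a) u with
    | none => tfR Arch dm I ρ u
    | some none => tfR Arch dm I ρ u ++ [TFVal.pair (tfR Arch dm I ρ (dm a)) a]
    | some (some f) => snoc' (tfR Arch dm I ρ u) (I f ρ.reverse a)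

/-- `tf Arch dm I α u` : maximal information domain `u` is permitted to have after `α`. -/
def tf {A D L V : Type} (Arch : ExtArch D L) (dm : A → D)
    (I : L → List A → A → TFVal A V) (α : List A) (u : D) : List (TFVal A V) :=
  tfR Arch dm I α.reverse u

/-- `inF Arch dm I α a u` : the information `in_{dom(a),u}(α, a)` transmitted to `u`
when action `a` is performed after `α`. -/
def inF {A D L V : Type} (Arch : ExtArch D L) (dm : A → D)
    (I : L → List A → A → TFVal A V) (α : List A) (a : A) (u : D) : TFVal A V :=
  match Arch.edge (dm a) u with
  | none => TFVal.eps
  | some none => TFVal.pair (tf Arch dm I α (dm a)) a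
  | some (some f) => I f α a
/-- The five domains of the downgrader architecture `DG` (`Dg` is the
downgrader `D`, `Lo` the low-security domain `L`). -/
inductive DGDom where
  | C : DGDom
  | P : DGDom
  | H : DGDom
  | Dg : DGDom
  | Lo : DGDom
deriving DecidableEq

/-- The downgrader extended architecture: reflexive `⊤`-edges, `C ↝_⊤ H`,
`P ↝_⊤ H`, `H ↝_⊤ D` and `D ↝_rel L` (the label set is `Unit`, with `()`
standing for `rel`). -/
def DGArch : ExtArch DGDom Unit where
  edge u v :=
    match u, v with
    | .C, .C => some none
    | .P, .P => some none
    | .H, .H => some none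
    | .Dg, .Dg => some none
    | .Lo, .Lo => some none
    | .C, .H => some none
    | .P, .H => some none
    | .H, .Dg => some none
    | .Dg, .Lo => some (some ())
    | _, _ => none
  refl u := by cases u <;> rfl

/-- The policy `↝′`: `(u,v,f) ∈ ↝′` iff `f = ⊤` and either `u = v = C` or
there is an edge `(u,v,g)` in `DG` with `{u,v} ⊆ {P,H,D,L}`. -/
def DGArch' : ExtArch DGDom Unit where
  edge u v :=
    if (u = DGDom.C ∧ v = DGDom.C) ∨
        ((DGArch.edge u v).isSome = true ∧ u ≠ DGDom.C ∧ v ≠ DGDom.C)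
    then some none else none
  refl u := by cases u <;> decide

/-- Membership in the downgrader architectural specification `C_DG`: the
filter function `rel` transmits `(tf_D^{↝′}(α), a)`. -/
def memCDG {A V : Type} (dm : A → DGDom) (I : Unit → List A → A → TFVal A V) :
    Prop :=
  ∀ (α : List A) (a : A), dm a = DGDom.Dg →
    I () α a = TFVal.pair (tf DGArch' dm I α DGDom.Dg) a

/-!
For the domains `u ∉ {C, L}` the two policies differ only by the edge `C ↝ H`, so
`tf_u^{↝′}` is `tf_u^{↝}` with every record of a `C` action erased, at every nesting
depth. Hence `tf_D^{↝}` determines `tf_D^{↝′}`, which by `C_DG` determines `𝕀(rel)`.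
-/

section EraseDom

variable {A D V : Type} [DecidableEq D]

def eraseDom (dm : A → D) (d : D) : List (TFVal A V) → List (TFVal A V)
  | [] => []
  | .pair σ a :: l =>
    if dm a = d then eraseDom dm d l else .pair (eraseDom dm d σ) a :: eraseDom dm d l
  | x :: l => x :: eraseDom dm d l

theorem eraseDom_append (dm : A → D) (d : D) (l₁ l₂ : List (TFVal A V)) :
    eraseDom dm d (l₁ ++ l₂) = eraseDom dm d l₁ ++ eraseDom dm d l₂ := by
  induction l₁ with
  | nil => simp [eraseDom]
  | cons x l ih =>
    cases x with
    | pair σ a => by_cases h : dm a = d <;> simp [eraseDom, h, ih]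
    | _ => simp [eraseDom, ih]

end EraseDom

theorem DGArch_edge_ne_some_some (x : DGDom) {u : DGDom} (hLo : u ≠ .Lo) (f : Unit) :
    DGArch.edge x u ≠ some (some f) := by
  cases x <;> cases u <;> simp_all [DGArch]

theorem DGArch_edge_Lo {u : DGDom} (hLo : u ≠ .Lo) : DGArch.edge .Lo u = none := by
  cases u <;> simp_all [DGArch]

theorem DGArch'_edge {u : DGDom} (hC : u ≠ .C) (hLo : u ≠ .Lo) (x : DGDom) :
    DGArch'.edge x u = if x = .C then none else DGArch.edge x u := by
  cases x <;> cases u <;> simp_all [DGArch, DGArch']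

theorem eraseDom_tfR_DGArch {A V : Type} (dm : A → DGDom)
    (I : Unit → List A → A → TFVal A V) (ρ : List A) {u : DGDom}
    (hC : u ≠ .C) (hLo : u ≠ .Lo) :
    eraseDom dm .C (tfR DGArch dm I ρ u) = tfR DGArch' dm I ρ u := by
  induction ρ generalizing u with
  | nil => simp [tfR, eraseDom]
  | cons a ρ ih =>
    rw [tfR, tfR, DGArch'_edge hC hLo]
    rcases hE : DGArch.edge (dm a) u with _ | _ | f
    · split_ifs <;> exact ih hC hLo
    · have hLo' : dm a ≠ .Lo := fun h => by simp [h, DGArch_edge_Lo hLo] at hE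
      by_cases hC' : dm a = .C
      · simp [hC', eraseDom_append, eraseDom, ih hC hLo]
      · simp [hC', eraseDom_append, eraseDom, ih hC hLo, ih hC' hLo']
    · exact absurd hE (DGArch_edge_ne_some_some _ hLo f)

/-- for interpretations in `C_DG`, `𝕀(rel)` is `tf_D`-compatible
with respect to the policy of `DG`. -/
theorem statement9 {A V : Type} (dm : A → DGDom)
    (I : Unit → List A → A → TFVal A V) (hI : memCDG dm I) :
    ∀ (α β : List A),
      tf DGArch dm I α DGDom.Dg = tf DGArch dm I β DGDom.Dg →
        ∀ a : A, dm a = DGDom.Dg → I () α a = I () β a := by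
  intro α β hαβ a ha
  have hDg : tf DGArch' dm I α .Dg = tf DGArch' dm I β .Dg := by
    simp only [tf] at hαβ ⊢
    rw [← eraseDom_tfR_DGArch dm I _ (by decide) (by decide), hαβ,
      eraseDom_tfR_DGArch dm I _ (by decide) (by decide)]
  rw [hI α a ha, hI β a ha, hDg]
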